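/- Let F and G be cyclically symmetric homogeneous polynomials on ℝ^N × ℝ^N of degrees r' and r'' respectively, with seeds f of class D(C_f, σ') and g of class D(C_g, σ''); assume σ' > σ'' and that f^(0) = 0, i.e. f = Σ_{m≥1} f^(m). Then the Poisson bracket H = {F, G} admits a seed h of class D(C_h, σ'') with C_h = 2 e^{−(σ'−σ'')} r' r'' C_f C_g / ((1 − e^{−σ'}) (1 − e^{−(σ'−σ'')})). -/

import Mathlib

open MvPolynomial Finset Real

/-- index set for the `2N` variables: `inl j` ↦ `x_j`, `inr j` ↦ `y_j` (indices mod `N`). -/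
abbrev Idx (N : ℕ) := Fin N ⊕ Fin N

/-- the cyclic shift `τ^s` (`s ∈ ℤ`) acting on polynomials: `τ^s X_j = X_{j+s}`
(indices mod `N`), separately on the `x` and `y` variables, so that
`(τ^s f)(x,y) = f(τ^s x, τ^s y)`. -/
noncomputable def tauPow (N : ℕ) [NeZero N] (s : ℤ) (f : MvPolynomial (Idx N) ℝ) :
    MvPolynomial (Idx N) ℝ :=
  rename (Sum.map (· + (Fin.intCast s : Fin N)) (· + (Fin.intCast s : Fin N))) f

/-- `f ↦ f^⊕ := ∑_{l=1}^N τ^l f`. -/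
noncomputable def oplus (N : ℕ) [NeZero N] (f : MvPolynomial (Idx N) ℝ) :
    MvPolynomial (Idx N) ℝ :=
  ∑ l ∈ Finset.range N, tauPow N ((l : ℤ) + 1) f

/-- the polynomial norm `‖f‖_R`; for a homogeneous polynomial of degree `s` it equals
`R^s ∑_{|j|+|k|=s} |f_{j,k}|`. -/
noncomputable def pnorm {N : ℕ} (R : ℝ) (f : MvPolynomial (Idx N) ℝ) : ℝ :=
  ∑ d ∈ f.support, |f.coeff d| * R ^ (d.sum fun _ e => e)

/-- the Poisson bracket `{f,g} = ∑_j (∂f/∂x_j ∂g/∂y_j − ∂f/∂y_j ∂g/∂x_j)`. -/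
noncomputable def poisson (N : ℕ) (f g : MvPolynomial (Idx N) ℝ) : MvPolynomial (Idx N) ℝ :=
  ∑ j : Fin N,
    (pderiv (Sum.inl j) f * pderiv (Sum.inr j) g - pderiv (Sum.inr j) f * pderiv (Sum.inl j) g)

/-- `p` involves only the sites `0,…,m` (it is left aligned with interaction distance `≤ m`). -/
def SuppIn (N : ℕ) (m : ℕ) (p : MvPolynomial (Idx N) ℝ) : Prop :=
  ∀ d ∈ p.support, ∀ j : Fin N, (d (Sum.inl j) ≠ 0 ∨ d (Sum.inr j) ≠ 0) → (j : ℕ) ≤ m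

/-- the seed `f` is of class `D(C,σ)`: it decomposes as `f = ∑_{m≥0} f^(m)` with each `f^(m)`
left aligned, containing only monomials of interaction distance `≤ m`, and
`‖f^(m)‖₁ ≤ C e^{−σ m}`. -/
def ClassD (N : ℕ) (Cf σ : ℝ) (f : MvPolynomial (Idx N) ℝ) : Prop :=
  ∃ (M : ℕ) (comp : ℕ → MvPolynomial (Idx N) ℝ),
    f = ∑ m ∈ Finset.range M, comp m ∧
    (∀ m, M ≤ m → comp m = 0) ∧
    (∀ m, SuppIn N m (comp m)) ∧
    (∀ m, pnorm 1 (comp m) ≤ Cf * Real.exp (-σ * m))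

/-- class `D(C,σ)` with vanishing `m = 0` component, `f^(0) = 0`. -/
def ClassDzero (N : ℕ) (Cf σ : ℝ) (f : MvPolynomial (Idx N) ℝ) : Prop :=
  ∃ (M : ℕ) (comp : ℕ → MvPolynomial (Idx N) ℝ),
    f = ∑ m ∈ Finset.range M, comp m ∧
    comp 0 = 0 ∧
    (∀ m, M ≤ m → comp m = 0) ∧
    (∀ m, SuppIn N m (comp m)) ∧
    (∀ m, pnorm 1 (comp m) ≤ Cf * Real.exp (-σ * m))

/-!
Since `τ` commutes with the Poisson bracket and `g^⊕` is `τ`-invariant,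
`{f^⊕, g^⊕} = (∑_b {f, τ^b g})^⊕`, and every summand may be translated freely inside `(·)^⊕`.
Pair `f^(k)` with `g^(m-k)`: the bracket `{f^(k), τ^b g^(m-k)}` vanishes unless the two supports
share a site, and then, translated back to the origin when `b > k`, it is left aligned with
interaction distance `≤ m`. By Euler's identity for homogeneous polynomials,
`∑_b ‖{p, τ^b q}‖₁ ≤ r' r'' ‖p‖₁ ‖q‖₁`, so component `m` has norm at most
`r' r'' C_f C_g ∑_{k=1}^m e^{-σ'k - σ''(m-k)} ≤ r' r'' C_f C_g e^{-σ''m} z / (1 - z)` with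
`z = e^{-(σ'-σ'')}`; the stated `C_h` exceeds this by the factor `2 / (1 - e^{-σ'}) ≥ 1`.
The components of `f` and `g` are first replaced by their homogeneous parts of degree `r'`, `r''`.
-/

section L1Norm

variable {σ : Type*}

noncomputable def l1Norm (p : MvPolynomial σ ℝ) : ℝ := ∑ d ∈ p.support, |p.coeff d|

lemma pnorm_one {N : ℕ} (p : MvPolynomial (Idx N) ℝ) : pnorm 1 p = l1Norm p := by
  simp [pnorm, l1Norm]

lemma l1Norm_nonneg (p : MvPolynomial σ ℝ) : 0 ≤ l1Norm p :=
  Finset.sum_nonneg fun _ _ => abs_nonneg _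

lemma l1Norm_eq_sum_of_support_subset {p : MvPolynomial σ ℝ} {s : Finset (σ →₀ ℕ)}
    (h : p.support ⊆ s) : l1Norm p = ∑ d ∈ s, |p.coeff d| :=
  Finset.sum_subset h fun d _ hd => by rw [notMem_support_iff.1 hd, abs_zero]

lemma l1Norm_le_of_abs_coeff_le {p q : MvPolynomial σ ℝ} (h : ∀ d, |q.coeff d| ≤ |p.coeff d|) :
    l1Norm q ≤ l1Norm p := by
  classical
  rw [l1Norm_eq_sum_of_support_subset (subset_union_left (s₂ := p.support)),
    l1Norm_eq_sum_of_support_subset (subset_union_right (s₁ := q.support))]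
  exact Finset.sum_le_sum fun d _ => h d

lemma l1Norm_add_le (p q : MvPolynomial σ ℝ) : l1Norm (p + q) ≤ l1Norm p + l1Norm q := by
  classical
  rw [l1Norm_eq_sum_of_support_subset support_add,
    l1Norm_eq_sum_of_support_subset (subset_union_left (s₂ := q.support)),
    l1Norm_eq_sum_of_support_subset (subset_union_right (s₁ := p.support)),
    ← Finset.sum_add_distrib]
  exact Finset.sum_le_sum fun d _ => by rw [coeff_add]; exact abs_add_le _ _

lemma l1Norm_sub_le (p q : MvPolynomial σ ℝ) : l1Norm (p - q) ≤ l1Norm p + l1Norm q := by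
  have hneg : l1Norm (-q) = l1Norm q := by simp [l1Norm, support_neg]
  simpa [sub_eq_add_neg, hneg] using l1Norm_add_le p (-q)

lemma l1Norm_sum_le {ι : Type*} (s : Finset ι) (F : ι → MvPolynomial σ ℝ) :
    l1Norm (∑ i ∈ s, F i) ≤ ∑ i ∈ s, l1Norm (F i) :=
  Finset.le_sum_of_subadditive l1Norm (by simp [l1Norm]) l1Norm_add_le s F

lemma l1Norm_monomial_le (d : σ →₀ ℕ) (c : ℝ) : l1Norm (monomial d c) ≤ |c| := by
  classical
  rw [l1Norm_eq_sum_of_support_subset support_monomial_subset]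
  simp

lemma l1Norm_rename {τ : Type*} {u : σ → τ} (hu : Function.Injective u) (p : MvPolynomial σ ℝ) :
    l1Norm (rename u p) = l1Norm p := by
  classical
  have hsupp : (rename u p).support = p.support.image (Finsupp.mapDomain u) := by
    rw [support_rename_of_injective hu]
  rw [l1Norm, hsupp, Finset.sum_image fun _ _ _ _ h => Finsupp.mapDomain_injective hu h]
  simp only [coeff_rename_mapDomain u hu, l1Norm]

lemma l1Norm_mul_monomial_le (p : MvPolynomial σ ℝ) (d : σ →₀ ℕ) (c : ℝ) :
    l1Norm (p * monomial d c) ≤ l1Norm p * |c| := by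
  classical
  have hsupp : (p * monomial d c).support ⊆ p.support.image (· + d) := by
    intro e he
    rw [mem_support_iff, coeff_mul_monomial'] at he
    split_ifs at he with hle
    · exact Finset.mem_image.2 ⟨e - d, mem_support_iff.2 (left_ne_zero_of_mul he),
        tsub_add_cancel_of_le hle⟩
    · exact absurd rfl he
  rw [l1Norm_eq_sum_of_support_subset hsupp,
    Finset.sum_image fun _ _ _ _ h => add_right_cancel h, l1Norm, Finset.sum_mul]
  simp only [coeff_mul_monomial, abs_mul, le_refl]

lemma l1Norm_mul_le (p q : MvPolynomial σ ℝ) : l1Norm (p * q) ≤ l1Norm p * l1Norm q := by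
  classical
  calc l1Norm (p * q) = l1Norm (∑ d ∈ q.support, p * monomial d (q.coeff d)) := by
        rw [← Finset.mul_sum, ← q.as_sum]
    _ ≤ ∑ d ∈ q.support, l1Norm p * |q.coeff d| :=
        (l1Norm_sum_le _ _).trans (Finset.sum_le_sum fun d _ => l1Norm_mul_monomial_le p d _)
    _ = l1Norm p * l1Norm q := by rw [← Finset.mul_sum]; rfl

lemma l1Norm_homogeneousComponent_le (n : ℕ) (p : MvPolynomial σ ℝ) :
    l1Norm (homogeneousComponent n p) ≤ l1Norm p :=
  l1Norm_le_of_abs_coeff_le fun d => by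
    rw [coeff_homogeneousComponent]
    split_ifs <;> simp

lemma l1Norm_pderiv_le (v : σ) (p : MvPolynomial σ ℝ) :
    l1Norm (pderiv v p) ≤ ∑ d ∈ p.support, |p.coeff d| * d v := by
  conv_lhs => rw [p.as_sum, map_sum]
  refine (l1Norm_sum_le _ _).trans (Finset.sum_le_sum fun d _ => ?_)
  rw [pderiv_monomial]
  exact (l1Norm_monomial_le _ _).trans (by simp [abs_mul])

lemma sum_l1Norm_pderiv_le [Fintype σ] {p : MvPolynomial σ ℝ} {n : ℕ} (hp : p.IsHomogeneous n) :
    ∑ v, l1Norm (pderiv v p) ≤ n * l1Norm p := by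
  calc ∑ v, l1Norm (pderiv v p) ≤ ∑ v, ∑ d ∈ p.support, |p.coeff d| * d v :=
        Finset.sum_le_sum fun v _ => l1Norm_pderiv_le v p
    _ = ∑ d ∈ p.support, |p.coeff d| * n := by
        rw [Finset.sum_comm]
        refine Finset.sum_congr rfl fun d hd => ?_
        rw [← Finset.mul_sum, hp.degree_eq_sum_deg_support hd, ← Finsupp.degree_apply,
          Finsupp.degree_eq_sum, Nat.cast_sum]
    _ = n * l1Norm p := by rw [l1Norm, Finset.mul_sum]; simp only [mul_comm]

end L1Norm

lemma vars_pderiv_subset {σ R : Type*} [CommSemiring R] (v : σ) (p : MvPolynomial σ R) :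
    (pderiv v p).vars ⊆ p.vars := by
  classical
  intro w hw
  obtain ⟨d, hd, hwd⟩ := (mem_vars_iff_mem_support _).1 hw
  rw [mem_support_iff, coeff_pderiv] at hd
  refine (mem_vars_iff_mem_support _).2 ⟨d + Finsupp.single v 1, mem_support_iff.2
    (left_ne_zero_of_mul hd), ?_⟩
  rw [Finsupp.mem_support_iff] at hwd ⊢
  simp [hwd]

namespace Idx

variable {N : ℕ}

def shift (a : Fin N) : Idx N → Idx N := Sum.map (· + a) (· + a)

def site : Idx N → Fin N := Sum.elim id id

lemma shift_injective (a : Fin N) : Function.Injective (shift a) :=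
  (add_left_injective a).sumMap (add_left_injective a)

lemma shift_comp_shift (a b : Fin N) : shift a ∘ shift b = shift (b + a) := by
  funext v
  cases v <;> simp [shift, add_assoc]

lemma site_shift (a : Fin N) (v : Idx N) : site (shift a v) = site v + a := by
  cases v <;> rfl

variable [NeZero N]

lemma shift_inl_sub (a j : Fin N) : shift a (Sum.inl (j - a)) = Sum.inl j := by
  simp [shift]

lemma shift_inr_sub (a j : Fin N) : shift a (Sum.inr (j - a)) = Sum.inr j := by
  simp [shift]

end Idx

open Idx

section Shift

variable {N : ℕ}

lemma rename_shift_rename_shift (a b : Fin N) (p : MvPolynomial (Idx N) ℝ) :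
    rename (shift a) (rename (shift b) p) = rename (shift (b + a)) p := by
  rw [rename_rename, shift_comp_shift]

variable [NeZero N]

lemma pderiv_inl_rename_shift (a j : Fin N) (q : MvPolynomial (Idx N) ℝ) :
    pderiv (Sum.inl j) (rename (shift a) q) = rename (shift a) (pderiv (Sum.inl (j - a)) q) := by
  rw [← pderiv_rename (shift_injective a), shift_inl_sub]

lemma pderiv_inr_rename_shift (a j : Fin N) (q : MvPolynomial (Idx N) ℝ) :
    pderiv (Sum.inr j) (rename (shift a) q) = rename (shift a) (pderiv (Sum.inr (j - a)) q) := by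
  rw [← pderiv_rename (shift_injective a), shift_inr_sub]

open Fin.CommRing in
lemma tauPow_natCast_add_one (l : ℕ) (p : MvPolynomial (Idx N) ℝ) :
    tauPow N ((l : ℤ) + 1) p = rename (shift ((l : Fin N) + 1)) p := by
  have : (Fin.intCast ((l : ℤ) + 1) : Fin N) = (l : Fin N) + 1 := by
    show (((l : ℤ) + 1 : ℤ) : Fin N) = _
    push_cast
    rfl
  simp only [tauPow, shift, this]

open Fin.CommRing in
lemma oplus_eq_sum_rename_shift (p : MvPolynomial (Idx N) ℝ) :
    oplus N p = ∑ b : Fin N, rename (shift b) p := by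
  rw [oplus, Finset.sum_congr rfl fun l _ => tauPow_natCast_add_one l p, ← Fin.sum_univ_eq_sum_range
    (fun l => rename (shift ((l : Fin N) + 1)) p)]
  simp only [Fin.cast_val_eq_self]
  exact Fintype.sum_equiv (Equiv.addRight 1) _ _ fun _ => rfl

lemma oplus_rename_shift (a : Fin N) (p : MvPolynomial (Idx N) ℝ) :
    oplus N (rename (shift a) p) = oplus N p := by
  simp only [oplus_eq_sum_rename_shift, rename_shift_rename_shift]
  exact Fintype.sum_equiv (Equiv.addLeft a) _ _ fun _ => rfl

lemma rename_shift_oplus (a : Fin N) (p : MvPolynomial (Idx N) ℝ) :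
    rename (shift a) (oplus N p) = oplus N p := by
  simp only [oplus_eq_sum_rename_shift, map_sum, rename_shift_rename_shift]
  exact Fintype.sum_equiv (Equiv.addRight a) _ _ fun _ => rfl

lemma oplus_sum {ι : Type*} (s : Finset ι) (F : ι → MvPolynomial (Idx N) ℝ) :
    oplus N (∑ i ∈ s, F i) = ∑ i ∈ s, oplus N (F i) := by
  simp only [oplus_eq_sum_rename_shift, map_sum]
  exact Finset.sum_comm

end Shift

section Poisson

variable {N : ℕ}

lemma poisson_zero_left (q : MvPolynomial (Idx N) ℝ) : poisson N 0 q = 0 := by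
  simp [poisson]

lemma poisson_sum_left {ι : Type*} (s : Finset ι) (F : ι → MvPolynomial (Idx N) ℝ)
    (q : MvPolynomial (Idx N) ℝ) :
    poisson N (∑ i ∈ s, F i) q = ∑ i ∈ s, poisson N (F i) q := by
  simp only [poisson, map_sum, Finset.sum_mul, ← Finset.sum_sub_distrib]
  exact Finset.sum_comm

lemma poisson_sum_right {ι : Type*} (s : Finset ι) (F : ι → MvPolynomial (Idx N) ℝ)
    (p : MvPolynomial (Idx N) ℝ) :
    poisson N p (∑ i ∈ s, F i) = ∑ i ∈ s, poisson N p (F i) := by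
  simp only [poisson, map_sum, Finset.mul_sum, ← Finset.sum_sub_distrib]
  exact Finset.sum_comm

lemma vars_poisson_subset (p q : MvPolynomial (Idx N) ℝ) :
    (poisson N p q).vars ⊆ p.vars ∪ q.vars := by
  refine (vars_sum_subset _ _).trans (Finset.biUnion_subset.2 fun j _ => ?_)
  refine (vars_sub_subset _).trans (Finset.union_subset ?_ ?_) <;>
  refine (vars_mul _ _).trans (Finset.union_subset_union ?_ ?_) <;>
  exact vars_pderiv_subset _ _

lemma exists_site_eq_of_poisson_ne_zero {p q : MvPolynomial (Idx N) ℝ} (h : poisson N p q ≠ 0) :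
    ∃ u ∈ p.vars, ∃ v ∈ q.vars, site u = site v := by
  obtain ⟨j, -, hj⟩ := Finset.exists_ne_zero_of_sum_ne_zero h
  have mem_vars : ∀ {v : Idx N} {r : MvPolynomial (Idx N) ℝ}, pderiv v r ≠ 0 → v ∈ r.vars :=
    fun hv => by_contra fun hnot => hv (pderiv_eq_zero_of_notMem_vars hnot)
  by_cases h₁ : pderiv (Sum.inl j) p * pderiv (Sum.inr j) q = 0
  · have h₂ : pderiv (Sum.inr j) p * pderiv (Sum.inl j) q ≠ 0 := fun h₂ =>
      hj (by rw [h₁, h₂, sub_zero])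
    obtain ⟨hp, hq⟩ := mul_ne_zero_iff.1 h₂
    exact ⟨_, mem_vars hp, _, mem_vars hq, rfl⟩
  · obtain ⟨hp, hq⟩ := mul_ne_zero_iff.1 h₁
    exact ⟨_, mem_vars hp, _, mem_vars hq, rfl⟩

variable [NeZero N]

lemma rename_shift_poisson (a : Fin N) (p q : MvPolynomial (Idx N) ℝ) :
    rename (shift a) (poisson N p q) = poisson N (rename (shift a) p) (rename (shift a) q) := by
  rw [poisson, poisson, map_sum]
  refine Fintype.sum_equiv (Equiv.addRight a) _ _ fun j => ?_
  simp only [Equiv.coe_addRight, map_sub, map_mul, pderiv_inl_rename_shift,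
    pderiv_inr_rename_shift, add_sub_cancel_right]

lemma oplus_poisson_oplus (p q : MvPolynomial (Idx N) ℝ) :
    oplus N (poisson N p (oplus N q)) = poisson N (oplus N p) (oplus N q) := by
  simp only [oplus_eq_sum_rename_shift (poisson N p _), rename_shift_poisson, rename_shift_oplus,
    oplus_eq_sum_rename_shift p, poisson_sum_left]

end Poisson

section Sites

variable {N : ℕ}

lemma suppIn_iff_vars {m : ℕ} {p : MvPolynomial (Idx N) ℝ} :
    SuppIn N m p ↔ ∀ v ∈ p.vars, (site v : ℕ) ≤ m := by
  simp only [SuppIn, mem_vars_iff_mem_support]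
  constructor
  · rintro h (j | j) ⟨d, hd, hj⟩ <;> exact h d hd j (by simp_all)
  · rintro h d hd j (hj | hj)
    · exact h (Sum.inl j) ⟨d, hd, Finsupp.mem_support_iff.2 hj⟩
    · exact h (Sum.inr j) ⟨d, hd, Finsupp.mem_support_iff.2 hj⟩

lemma suppIn_sum {ι : Type*} {s : Finset ι} {F : ι → MvPolynomial (Idx N) ℝ} {m : ℕ}
    (h : ∀ i ∈ s, SuppIn N m (F i)) : SuppIn N m (∑ i ∈ s, F i) := by
  classical
  rw [suppIn_iff_vars]
  intro v hv
  obtain ⟨i, hi, hvi⟩ := Finset.mem_biUnion.1 (vars_sum_subset s F hv)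
  exact suppIn_iff_vars.1 (h i hi) v hvi

lemma suppIn_homogeneousComponent {m : ℕ} {p : MvPolynomial (Idx N) ℝ} (h : SuppIn N m p)
    (n : ℕ) : SuppIn N m (homogeneousComponent n p) := fun d hd =>
  h d (by rw [support_homogeneousComponent] at hd; exact (Finset.mem_filter.1 hd).1)

variable [NeZero N]

def realignShift (m : ℕ) (b : Fin N) : Fin N := if (b : ℕ) ≤ m then 0 else b

/-- If `[0, m']` meets the window `b + [0, m'']` (through `j`), moving the window back to the
origin when `b > m'` keeps both windows inside `[0, m' + m'']`. -/
lemma val_sub_realignShift_le {m' m'' : ℕ} {b j w : Fin N} (hj : (j : ℕ) ≤ m')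
    (hjb : ((j - b : Fin N) : ℕ) ≤ m'') (hw : (w : ℕ) ≤ m' ∨ ((w - b : Fin N) : ℕ) ≤ m'') :
    ((w - realignShift m' b : Fin N) : ℕ) ≤ m' + m'' := by
  unfold realignShift
  split_ifs with hb
  · rw [sub_zero]
    rcases hw with hw | hw
    · omega
    · rcases le_or_gt b w with hbw | hbw
      · rw [Fin.coe_sub_iff_le.2 hbw] at hw
        omega
      · exact (Fin.lt_def.1 hbw).le.trans (by omega)
  · have hjb' := Fin.coe_sub_iff_lt.2 (Fin.lt_def.2 (by omega : (j : ℕ) < b))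
    rcases hw with hw | hw
    · rw [Fin.coe_sub_iff_lt.2 (Fin.lt_def.2 (by omega : (w : ℕ) < b))]
      omega
    · omega

noncomputable def realignedBracket (m : ℕ) (p q : MvPolynomial (Idx N) ℝ) (b : Fin N) :
    MvPolynomial (Idx N) ℝ :=
  rename (shift (-realignShift m b)) (poisson N p (rename (shift b) q))

lemma suppIn_realignedBracket {m' m'' : ℕ} {p q : MvPolynomial (Idx N) ℝ} (hp : SuppIn N m' p)
    (hq : SuppIn N m'' q) (b : Fin N) : SuppIn N (m' + m'') (realignedBracket m' p q b) := by
  by_cases h0 : poisson N p (rename (shift b) q) = 0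
  · simp [realignedBracket, h0, SuppIn]
  rw [suppIn_iff_vars] at hp hq ⊢
  have hq' : ∀ v ∈ (rename (shift b) q).vars, ((site v - b : Fin N) : ℕ) ≤ m'' := by
    intro v hv
    obtain ⟨x, hx, rfl⟩ := Finset.mem_image.1 (vars_rename _ _ hv)
    rw [site_shift, add_sub_cancel_right]
    exact hq x hx
  obtain ⟨u, hu, v, hv, huv⟩ := exists_site_eq_of_poisson_ne_zero h0
  intro s hs
  obtain ⟨w, hw, rfl⟩ := Finset.mem_image.1 (vars_rename _ _ hs)
  rw [site_shift, ← sub_eq_add_neg]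
  refine val_sub_realignShift_le (hp u hu) (huv ▸ hq' v hv) ?_
  rcases Finset.mem_union.1 (vars_poisson_subset _ _ hw) with hw | hw
  · exact Or.inl (hp w hw)
  · exact Or.inr (hq' w hw)

end Sites

lemma sum_sum_mul_sub {G R : Type*} [AddCommGroup G] [Fintype G] [CommSemiring R]
    (A B : G → R) : ∑ b, ∑ j, A j * B (j - b) = (∑ j, A j) * ∑ j, B j := by
  rw [Finset.sum_comm, Finset.sum_mul]
  refine Finset.sum_congr rfl fun j _ => ?_
  rw [← Finset.mul_sum]
  exact congrArg _ (Fintype.sum_equiv (Equiv.subLeft j) _ _ fun _ => rfl)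

section Bracket

variable {N : ℕ} [NeZero N]

lemma l1Norm_poisson_rename_shift_le (p q : MvPolynomial (Idx N) ℝ) (b : Fin N) :
    l1Norm (poisson N p (rename (shift b) q)) ≤
      ∑ j, (l1Norm (pderiv (Sum.inl j) p) * l1Norm (pderiv (Sum.inr (j - b)) q) +
        l1Norm (pderiv (Sum.inr j) p) * l1Norm (pderiv (Sum.inl (j - b)) q)) := by
  refine (l1Norm_sum_le _ _).trans (Finset.sum_le_sum fun j _ => ?_)
  refine (l1Norm_sub_le _ _).trans (add_le_add ?_ ?_) <;>
  refine (l1Norm_mul_le _ _).trans_eq ?_ <;>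
  simp only [pderiv_inl_rename_shift, pderiv_inr_rename_shift, l1Norm_rename (shift_injective b)]

/-- Summing over all relative positions `b` decouples the two factors, so each derivative of
`q` is counted exactly once. -/
lemma sum_l1Norm_poisson_rename_shift_le {p q : MvPolynomial (Idx N) ℝ} {r s : ℕ}
    (hp : p.IsHomogeneous r) (hq : q.IsHomogeneous s) :
    ∑ b, l1Norm (poisson N p (rename (shift b) q)) ≤ r * s * (l1Norm p * l1Norm q) := by
  set X := fun (t : MvPolynomial (Idx N) ℝ) j => l1Norm (pderiv (Sum.inl j) t)
  set Y := fun (t : MvPolynomial (Idx N) ℝ) j => l1Norm (pderiv (Sum.inr j) t)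
  have hXY : ∀ t, ∑ v, l1Norm (pderiv v t) = ∑ j, X t j + ∑ j, Y t j :=
    fun t => Fintype.sum_sum_type _
  have hX : ∀ t, 0 ≤ ∑ j, X t j := fun t => Finset.sum_nonneg fun _ _ => l1Norm_nonneg _
  have hY : ∀ t, 0 ≤ ∑ j, Y t j := fun t => Finset.sum_nonneg fun _ _ => l1Norm_nonneg _
  calc ∑ b, l1Norm (poisson N p (rename (shift b) q))
      ≤ ∑ b, ∑ j, (X p j * Y q (j - b) + Y p j * X q (j - b)) :=
        Finset.sum_le_sum fun b _ => l1Norm_poisson_rename_shift_le p q b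
    _ = (∑ j, X p j) * (∑ j, Y q j) + (∑ j, Y p j) * (∑ j, X q j) := by
        simp only [Finset.sum_add_distrib, sum_sum_mul_sub]
    _ ≤ (∑ v, l1Norm (pderiv v p)) * (∑ v, l1Norm (pderiv v q)) := by
        rw [hXY, hXY]
        nlinarith [mul_nonneg (hX p) (hX q), mul_nonneg (hY p) (hY q)]
    _ ≤ (r * l1Norm p) * (s * l1Norm q) :=
        mul_le_mul (sum_l1Norm_pderiv_le hp) (sum_l1Norm_pderiv_le hq)
          (Finset.sum_nonneg fun _ _ => l1Norm_nonneg _) (by positivity [l1Norm_nonneg p])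
    _ = r * s * (l1Norm p * l1Norm q) := by ring

/-- The seed of `{p^⊕, q^⊕}` built from `p` anchored at the origin with interaction distance
`m`: one realigned bracket of `p` with each translate of `q`. -/
noncomputable def bracketSeed (m : ℕ) (p q : MvPolynomial (Idx N) ℝ) : MvPolynomial (Idx N) ℝ :=
  ∑ b, realignedBracket m p q b

lemma oplus_bracketSeed (m : ℕ) (p q : MvPolynomial (Idx N) ℝ) :
    oplus N (bracketSeed m p q) = poisson N (oplus N p) (oplus N q) := by
  simp only [bracketSeed, realignedBracket, oplus_sum, oplus_rename_shift]
  rw [← oplus_sum, ← poisson_sum_right, ← oplus_eq_sum_rename_shift, oplus_poisson_oplus]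

lemma bracketSeed_zero_left (m : ℕ) (q : MvPolynomial (Idx N) ℝ) : bracketSeed m 0 q = 0 := by
  simp [bracketSeed, realignedBracket, poisson_zero_left]

lemma bracketSeed_zero_right (m : ℕ) (p : MvPolynomial (Idx N) ℝ) : bracketSeed m p 0 = 0 := by
  simp [bracketSeed, realignedBracket, poisson]

lemma suppIn_bracketSeed {m' m'' : ℕ} {p q : MvPolynomial (Idx N) ℝ} (hp : SuppIn N m' p)
    (hq : SuppIn N m'' q) : SuppIn N (m' + m'') (bracketSeed m' p q) :=
  suppIn_sum fun b _ => suppIn_realignedBracket hp hq b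

lemma l1Norm_bracketSeed_le (m : ℕ) {p q : MvPolynomial (Idx N) ℝ} {r s : ℕ}
    (hp : p.IsHomogeneous r) (hq : q.IsHomogeneous s) :
    l1Norm (bracketSeed m p q) ≤ r * s * (l1Norm p * l1Norm q) := by
  refine (l1Norm_sum_le _ _).trans (le_of_eq_of_le ?_ (sum_l1Norm_poisson_rename_shift_le hp hq))
  simp only [realignedBracket, l1Norm_rename (shift_injective _)]

end Bracket

lemma sum_exp_mul_exp_le {σ' σ'' : ℝ} (h : σ'' < σ') (m : ℕ) :
    ∑ k ∈ range m, exp (-σ' * ((k + 1 : ℕ) : ℝ)) * exp (-σ'' * ((m - (k + 1) : ℕ) : ℝ)) ≤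
      exp (-σ'' * m) * (exp (-(σ' - σ'')) / (1 - exp (-(σ' - σ'')))) := by
  set z := exp (-(σ' - σ''))
  have hz : z < 1 := exp_lt_one_iff.2 (by linarith)
  have hterm : ∀ k ∈ range m, exp (-σ' * ((k + 1 : ℕ) : ℝ)) *
      exp (-σ'' * ((m - (k + 1) : ℕ) : ℝ)) = exp (-σ'' * m) * z ^ (k + 1) := by
    intro k hk
    rw [Nat.cast_sub (Finset.mem_range.1 hk), ← exp_nat_mul, ← exp_add, ← exp_add]
    congr 1
    push_cast
    ring
  rw [Finset.sum_congr rfl hterm, ← Finset.mul_sum]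
  refine mul_le_mul_of_nonneg_left ?_ (exp_pos _).le
  have hgeom := geom_sum_Ico_le_of_lt_one (m := 0) (n := m) (exp_pos _).le hz
  rw [← Finset.range_eq_Ico, pow_zero] at hgeom
  calc ∑ k ∈ range m, z ^ (k + 1) = z * ∑ k ∈ range m, z ^ k := by
        simp only [Finset.mul_sum, pow_succ']
    _ ≤ z * (1 / (1 - z)) := mul_le_mul_of_nonneg_left hgeom (exp_pos _).le
    _ = z / (1 - z) := mul_one_div _ _

section Decomposition

variable {N : ℕ}

structure IsSeedDecomposition (N : ℕ) (C σ : ℝ) (M : ℕ) (comp : ℕ → MvPolynomial (Idx N) ℝ) :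
    Prop where
  eq_zero : ∀ m, M ≤ m → comp m = 0
  suppIn : ∀ m, SuppIn N m (comp m)
  l1Norm_le : ∀ m, l1Norm (comp m) ≤ C * exp (-σ * m)

namespace IsSeedDecomposition

variable {C σ : ℝ} {M : ℕ} {comp : ℕ → MvPolynomial (Idx N) ℝ}

lemma classD (h : IsSeedDecomposition N C σ M comp) : ClassD N C σ (∑ m ∈ range M, comp m) :=
  ⟨M, comp, rfl, h.eq_zero, h.suppIn, fun m => (pnorm_one _).trans_le (h.l1Norm_le m)⟩

lemma const_nonneg (h : IsSeedDecomposition N C σ M comp) : 0 ≤ C := by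
  simpa using (l1Norm_nonneg _).trans (h.l1Norm_le 0)

lemma mono_const (h : IsSeedDecomposition N C σ M comp) {C' : ℝ} (hC : C ≤ C') :
    IsSeedDecomposition N C' σ M comp :=
  ⟨h.eq_zero, h.suppIn, fun m => (h.l1Norm_le m).trans (by gcongr)⟩

lemma homogeneousComponent (h : IsSeedDecomposition N C σ M comp) (n : ℕ) :
    IsSeedDecomposition N C σ M (fun m => homogeneousComponent n (comp m)) :=
  ⟨fun m hm => by simp [h.eq_zero m hm], fun m => suppIn_homogeneousComponent (h.suppIn m) n,
    fun m => (l1Norm_homogeneousComponent_le n _).trans (h.l1Norm_le m)⟩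

end IsSeedDecomposition

variable [NeZero N]

/-- Component `m` of the seed of `{f^⊕, g^⊕}`: the pairs `f^(k)`, `g^(m-k)`. -/
noncomputable def poissonSeedComp (fc gc : ℕ → MvPolynomial (Idx N) ℝ) (m : ℕ) :
    MvPolynomial (Idx N) ℝ :=
  ∑ k ∈ range (m + 1), bracketSeed k (fc k) (gc (m - k))

lemma oplus_sum_poissonSeedComp {fc gc : ℕ → MvPolynomial (Idx N) ℝ} {M₁ M₂ : ℕ}
    (hf : ∀ m ≥ M₁, fc m = 0) (hg : ∀ m ≥ M₂, gc m = 0) :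
    oplus N (∑ m ∈ range (M₁ + M₂), poissonSeedComp fc gc m) =
      poisson N (oplus N (∑ m ∈ range M₁, fc m)) (oplus N (∑ m ∈ range M₂, gc m)) := by
  calc oplus N (∑ m ∈ range (M₁ + M₂), poissonSeedComp fc gc m)
      = ∑ m ∈ range (M₁ + M₂), ∑ k ∈ range (m + 1),
          poisson N (oplus N (fc k)) (oplus N (gc (m - k))) := by
        simp only [poissonSeedComp, oplus_sum, oplus_bracketSeed]
    _ = ∑ k ∈ range (M₁ + M₂), ∑ c ∈ range (M₁ + M₂ - k),
          poisson N (oplus N (fc k)) (oplus N (gc c)) :=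
        Finset.sum_range_diag_flip _ fun k c => poisson N (oplus N (fc k)) (oplus N (gc c))
    _ = ∑ k ∈ range (M₁ + M₂), poisson N (oplus N (fc k)) (oplus N (∑ c ∈ range M₂, gc c)) := by
        refine Finset.sum_congr rfl fun k _ => ?_
        rw [← poisson_sum_right, ← oplus_sum]
        by_cases hk : k < M₁
        · rw [Finset.eventually_constant_sum hg (by omega)]
        · simp [hf k (by omega), oplus_eq_sum_rename_shift, poisson_zero_left]
    _ = _ := by rw [← poisson_sum_left, ← oplus_sum, Finset.eventually_constant_sum hf (by omega)]

lemma IsSeedDecomposition.poissonSeedComp {fc gc : ℕ → MvPolynomial (Idx N) ℝ}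
    {Cf Cg σ' σ'' : ℝ} {M₁ M₂ r' r'' : ℕ}
    (hf : IsSeedDecomposition N Cf σ' M₁ fc) (hg : IsSeedDecomposition N Cg σ'' M₂ gc)
    (hf0 : fc 0 = 0) (hfr : ∀ m, (fc m).IsHomogeneous r') (hgr : ∀ m, (gc m).IsHomogeneous r'')
    (hσ : σ'' < σ') :
    IsSeedDecomposition N (r' * r'' * Cf * Cg * (exp (-(σ' - σ'')) / (1 - exp (-(σ' - σ'')))))
      σ'' (M₁ + M₂) (poissonSeedComp fc gc) := by
  refine ⟨fun m hm => Finset.sum_eq_zero fun k hk => ?_, fun m => suppIn_sum fun k hk => ?_,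
    fun m => ?_⟩
  · rcases le_or_gt M₁ k with hk₁ | hk₁
    · rw [hf.eq_zero k hk₁, bracketSeed_zero_left]
    · rw [hg.eq_zero (m - k) (by omega), bracketSeed_zero_right]
  · simpa [Nat.add_sub_cancel' (Nat.lt_succ_iff.1 (Finset.mem_range.1 hk))] using
      suppIn_bracketSeed (hf.suppIn k) (hg.suppIn (m - k))
  have hsplit : _root_.poissonSeedComp fc gc m =
      ∑ k ∈ range m, bracketSeed (k + 1) (fc (k + 1)) (gc (m - (k + 1))) := by
    rw [_root_.poissonSeedComp, Finset.sum_range_succ', hf0, bracketSeed_zero_left,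
      add_zero]
  have hCfCg : 0 ≤ (r' : ℝ) * r'' * Cf * Cg := by
    have := hf.const_nonneg
    have := hg.const_nonneg
    positivity
  rw [hsplit]
  calc l1Norm (∑ k ∈ range m, bracketSeed (k + 1) (fc (k + 1)) (gc (m - (k + 1))))
      ≤ ∑ k ∈ range m, r' * r'' * (l1Norm (fc (k + 1)) * l1Norm (gc (m - (k + 1)))) :=
        (l1Norm_sum_le _ _).trans
          (Finset.sum_le_sum fun k _ => l1Norm_bracketSeed_le _ (hfr _) (hgr _))
    _ ≤ ∑ k ∈ range m, r' * r'' * ((Cf * exp (-σ' * ((k + 1 : ℕ) : ℝ))) *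
          (Cg * exp (-σ'' * ((m - (k + 1) : ℕ) : ℝ)))) := by
        refine Finset.sum_le_sum fun k _ => mul_le_mul_of_nonneg_left ?_ (by positivity)
        exact mul_le_mul (hf.l1Norm_le _) (hg.l1Norm_le _) (l1Norm_nonneg _)
          ((l1Norm_nonneg _).trans (hf.l1Norm_le _))
    _ = r' * r'' * Cf * Cg * ∑ k ∈ range m,
          exp (-σ' * ((k + 1 : ℕ) : ℝ)) * exp (-σ'' * ((m - (k + 1) : ℕ) : ℝ)) := by
        rw [Finset.mul_sum]
        exact Finset.sum_congr rfl fun _ _ => by ring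
    _ ≤ r' * r'' * Cf * Cg * (exp (-σ'' * m) * (exp (-(σ' - σ'')) / (1 - exp (-(σ' - σ''))))) :=
        mul_le_mul_of_nonneg_left (sum_exp_mul_exp_le hσ m) hCfCg
    _ = _ := by ring

end Decomposition

theorem poisson_classD_zero_general (N : ℕ) [NeZero N]
    (r' r'' : ℕ) (f g : MvPolynomial (Idx N) ℝ)
    (hf : f.IsHomogeneous r') (hg : g.IsHomogeneous r'')
    (Cf Cg σ' σ'' : ℝ)
    (hσ'' : 0 < σ'') (hgt : σ'' < σ')
    (hfD : ClassDzero N Cf σ' f) (hgD : ClassD N Cg σ'' g) :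
    ∃ h : MvPolynomial (Idx N) ℝ,
      oplus N h = poisson N (oplus N f) (oplus N g) ∧
      ClassD N
        (2 * Real.exp (-(σ' - σ'')) * r' * r'' * Cf * Cg /
          ((1 - Real.exp (-σ')) * (1 - Real.exp (-(σ' - σ''))))) σ'' h := by
  obtain ⟨M₁, fc, rfl, hfc0, hfcM, hfcS, hfcB⟩ := hfD
  obtain ⟨M₂, gc, rfl, hgcM, hgcS, hgcB⟩ := hgD
  have hfd := (IsSeedDecomposition.mk (C := Cf) (σ := σ') hfcM hfcS
    fun m => (pnorm_one _).symm.trans_le (hfcB m)).homogeneousComponent r'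
  have hgd := (IsSeedDecomposition.mk (C := Cg) (σ := σ'') hgcM hgcS
    fun m => (pnorm_one _).symm.trans_le (hgcB m)).homogeneousComponent r''
  have hhd := hfd.poissonSeedComp hgd (by simp [hfc0])
    (fun _ => homogeneousComponent_isHomogeneous _ _)
    (fun _ => homogeneousComponent_isHomogeneous _ _) hgt
  refine ⟨_, ?_, (hhd.mono_const ?_).classD⟩
  · rw [oplus_sum_poissonSeedComp hfd.eq_zero hgd.eq_zero, ← map_sum, ← map_sum,
      homogeneousComponent_eq_self hf, homogeneousComponent_eq_self hg]
  · have hx : exp (-σ') < 1 := exp_lt_one_iff.2 (by linarith)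
    have hz : exp (-(σ' - σ'')) < 1 := exp_lt_one_iff.2 (by linarith)
    have hCf := hfd.const_nonneg
    have hCg := hgd.const_nonneg
    rw [show 2 * exp (-(σ' - σ'')) * r' * r'' * Cf * Cg /
        ((1 - exp (-σ')) * (1 - exp (-(σ' - σ'')))) = 2 / (1 - exp (-σ')) *
        (r' * r'' * Cf * Cg * (exp (-(σ' - σ'')) / (1 - exp (-(σ' - σ''))))) by
      field_simp]
    refine le_mul_of_one_le_left (by positivity) ?_
    rw [le_div_iff₀ (by linarith)]
    linarith [exp_pos (-σ')]

/-- Let `F = f^⊕`, `G = g^⊕` be cyclically symmetric homogeneous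
polynomials of degrees `r', r''` with seeds `f ∈ D(C_f,σ')`, `g ∈ D(C_g,σ'')`; assume
`σ' > σ''` and `f^(0) = 0`.  Then `{F,G}` admits a seed `h` of class `D(C_h, σ'')` with
`C_h = 2 e^{−(σ'−σ'')} r' r'' C_f C_g / ((1−e^{−σ'})(1−e^{−(σ'−σ'')}))`. -/
theorem poisson_classD_zero (N : ℕ) [NeZero N]
    (r' r'' : ℕ) (f g : MvPolynomial (Idx N) ℝ)
    (hf : f.IsHomogeneous r') (hg : g.IsHomogeneous r'')
    (Cf Cg σ' σ'' : ℝ) (hCf : 0 < Cf) (hCg : 0 < Cg)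
    (hσ'' : 0 < σ'') (hgt : σ'' < σ')
    (hfD : ClassDzero N Cf σ' f) (hgD : ClassD N Cg σ'' g) :
    ∃ h : MvPolynomial (Idx N) ℝ,
      oplus N h = poisson N (oplus N f) (oplus N g) ∧
      ClassD N
        (2 * Real.exp (-(σ' - σ'')) * r' * r'' * Cf * Cg /
          ((1 - Real.exp (-σ')) * (1 - Real.exp (-(σ' - σ''))))) σ'' h :=
  poisson_classD_zero_general N r' r'' f g hf hg Cf Cg σ' σ'' hσ'' hgt hfD hgD
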